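/- Let F be a field, G a finite cyclic group of order n = ℓm, H ≤ G a subgroup of order m, and f = Σ_{h ∈ H} h ∈ F[G]. Let F_mat = ρ(f) be the matrix associated to f in the regular right representation ρ of G. Then the characteristic polynomial of F_mat is z^{n−ℓ}(z − m·1_F)^ℓ, where m·1_F is the image of the integer m in F. In particular, if char F divides m, the characteristic polynomial is z^n, while rank F_mat = ℓ. -/

import Mathlib

/-!
Write `π : G → G ⧸ H` for the quotient map and `A` for the `G × (G ⧸ H)` incidence matrix of
its graph. Then `ρ(f) = A Aᵀ`, while `Aᵀ A = m • 1` because every coset has `m` elements. Since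
`A Aᵀ` and `Aᵀ A` have the same characteristic polynomial up to a factor `X ^ (n - ℓ)`, the
characteristic polynomial of `ρ(f)` is `X ^ (n - ℓ) * (X - m) ^ ℓ`. The rank is at most `ℓ`
because `ρ(f)` factors through `F ^ ℓ`, and at least `ℓ` because restricting `ρ(f)` to a set
of coset representatives gives the identity matrix.
-/

open Polynomial Matrix Finset

/-- The representation of the group algebra `F[G]` induced by the regular right
representation of `G`: the matrix of `g ∈ G` has `(i,j)` entry `1` if `i * g = j`
and `0` otherwise, extended `F`-linearly. -/
def rho (F : Type*) [Field F] {G : Type*} [Group G] [Fintype G] [DecidableEq G]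
    (f : MonoidAlgebra F G) : Matrix G G F :=
  ∑ g : G, f.coeff g • Matrix.of (fun i j => if i * g = j then (1 : F) else 0)

namespace Matrix

def fiberIncidence {ι κ : Type*} [DecidableEq κ] (R : Type*) [Zero R] [One R] (π : ι → κ) :
    Matrix ι κ R :=
  of fun i k => if π i = k then 1 else 0

variable {ι κ R : Type*} [DecidableEq κ] [CommRing R]

theorem fiberIncidence_mul_transpose [Fintype κ] (π : ι → κ) :
    fiberIncidence R π * (fiberIncidence R π)ᵀ
      = of fun i j => if π i = π j then 1 else 0 := by
  ext i j
  simp [fiberIncidence, mul_apply]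

theorem transpose_mul_fiberIncidence [Fintype ι] (π : ι → κ) :
    (fiberIncidence R π)ᵀ * fiberIncidence R π = diagonal fun k => (#{i | π i = k} : R) := by
  ext k k'
  simp only [fiberIncidence, mul_apply, transpose_apply, of_apply, diagonal_apply, mul_ite,
    mul_one, mul_zero]
  split_ifs with h
  · subst h
    rw [natCast_card_filter]
    exact sum_congr rfl fun i _ => by split_ifs <;> rfl
  · exact sum_eq_zero fun i _ => by grind

theorem charpoly_fiberIncidence_mul_transpose [Fintype ι] [DecidableEq ι] [Fintype κ]
    (π : ι → κ) {m : ℕ} (hfiber : ∀ k, #{i | π i = k} = m)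
    (hle : Fintype.card κ ≤ Fintype.card ι) :
    (fiberIncidence R π * (fiberIncidence R π)ᵀ).charpoly
      = X ^ (Fintype.card ι - Fintype.card κ) * (X - C (m : R)) ^ Fintype.card κ := by
  rw [charpoly_mul_comm_of_le _ _ hle, transpose_mul_fiberIncidence, charpoly_diagonal]
  simp [hfiber]

theorem rank_fiberIncidence_mul_transpose [Fintype ι] [Fintype κ] [StrongRankCondition R]
    {π : ι → κ} (hπ : Function.Surjective π) :
    (fiberIncidence R π * (fiberIncidence R π)ᵀ).rank = Fintype.card κ := by
  refine le_antisymm ((rank_mul_le_left _ _).trans (rank_le_card_width _)) ?_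
  have hsection : (fiberIncidence R π * (fiberIncidence R π)ᵀ).submatrix
      (Function.surjInv hπ) (Function.surjInv hπ) = 1 := by
    ext k k'
    simp [fiberIncidence_mul_transpose, Function.surjInv_eq hπ, one_apply]
  calc Fintype.card κ = (1 : Matrix κ κ R).rank := rank_one.symm
    _ ≤ _ := hsection ▸ rank_submatrix_le _ _ _

end Matrix

section GroupAlgebra

variable {F G : Type*} [Field F] [Group G] [DecidableEq G]

theorem rho_apply [Fintype G] (f : MonoidAlgebra F G) (i j : G) :
    rho F f i j = f.coeff (i⁻¹ * j) := by
  simp only [rho, Matrix.sum_apply, Matrix.smul_apply, Matrix.of_apply, smul_eq_mul, mul_ite,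
    mul_one, mul_zero]
  simp_rw [← eq_inv_mul_iff_mul_eq]
  exact Fintype.sum_ite_eq' _ _

theorem MonoidAlgebra.coeff_sum_of_subgroup (H : Subgroup G) [Fintype H]
    [DecidablePred (· ∈ H)] (x : G) :
    (∑ h : H, MonoidAlgebra.of F G h).coeff x = if x ∈ H then 1 else 0 := by
  simp only [MonoidAlgebra.of_apply, MonoidAlgebra.coeff_sum, MonoidAlgebra.coeff_single,
    Finsupp.coe_finsetSum, Finset.sum_apply, Finsupp.single_apply, Finset.sum_boole]
  split_ifs with hx
  · rw [card_eq_one.mpr ⟨⟨x, hx⟩, by ext; simp [Subtype.ext_iff]⟩, Nat.cast_one]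
  · rw [card_eq_zero.mpr (by ext; simp; grind), Nat.cast_zero]

theorem rho_sum_of_subgroup [Fintype G] (H : Subgroup G) [Fintype H] [Fintype (G ⧸ H)]
    [DecidableEq (G ⧸ H)] :
    rho F (∑ h : H, MonoidAlgebra.of F G h)
      = fiberIncidence F (QuotientGroup.mk : G → G ⧸ H)
        * (fiberIncidence F (QuotientGroup.mk : G → G ⧸ H))ᵀ := by
  classical
  ext i j
  rw [rho_apply, MonoidAlgebra.coeff_sum_of_subgroup, fiberIncidence_mul_transpose, of_apply]
  exact if_congr QuotientGroup.eq.symm rfl rfl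

end GroupAlgebra

theorem QuotientGroup.card_filter_mk_eq {G : Type*} [Group G] [Fintype G] (H : Subgroup G)
    [Fintype H] [DecidableEq (G ⧸ H)] (q : G ⧸ H) :
    #{i : G | (i : G ⧸ H) = q} = Fintype.card H := by
  classical
  simpa [Nat.card_eq_fintype_card, Fintype.card_subtype] using
    QuotientGroup.card_preimage_mk H {q}

theorem charpoly_of_subgroup_sum_general
    {G : Type*} [Group G] [Fintype G] [DecidableEq G] {F : Type*} [Field F]
    (H : Subgroup G) [Fintype H] (ℓ m : ℕ)
    (hm : Fintype.card H = m) (hn : Fintype.card G = ℓ * m)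
    (f : MonoidAlgebra F G) (hf : f = ∑ h : H, MonoidAlgebra.of F G (h : G)) :
    (rho F f).charpoly
        = Polynomial.X ^ (Fintype.card G - ℓ)
          * (Polynomial.X - Polynomial.C ((m : F))) ^ ℓ ∧
    ((ringChar F ∣ m) → (rho F f).charpoly = Polynomial.X ^ (Fintype.card G)) ∧
    (rho F f).rank = ℓ := by
  classical
  have hm_pos : 0 < m := hm ▸ Fintype.card_pos
  have hindex : Fintype.card (G ⧸ H) = ℓ := by
    have := H.card_eq_card_quotient_mul_card_subgroup
    simp only [Nat.card_eq_fintype_card, hm, hn] at this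
    exact (Nat.eq_of_mul_eq_mul_right hm_pos this).symm
  have hℓ_le : ℓ ≤ Fintype.card G := hn ▸ Nat.le_mul_of_pos_right ℓ hm_pos
  have hchar : (rho F f).charpoly = X ^ (Fintype.card G - ℓ) * (X - C (m : F)) ^ ℓ := by
    rw [hf, rho_sum_of_subgroup, charpoly_fiberIncidence_mul_transpose _
      (fun q => (QuotientGroup.card_filter_mk_eq H q).trans hm) (hindex ▸ hℓ_le), hindex]
  refine ⟨hchar, fun hdvd => ?_, ?_⟩
  · rw [hchar, (ringChar.spec F m).mpr hdvd, map_zero, sub_zero, ← pow_add,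
      Nat.sub_add_cancel hℓ_le]
  · rw [hf, rho_sum_of_subgroup, rank_fiberIncidence_mul_transpose QuotientGroup.mk_surjective,
      hindex]

/-- Let `G` be a finite cyclic group of order `n = ℓ·m`, `H ≤ G` a
subgroup of order `m`, `f = Σ_{h ∈ H} h ∈ F[G]`, and `F_mat = ρ(f)`. Then the
characteristic polynomial of `F_mat` is `z^(n-ℓ) (z - m·1_F)^ℓ`. In particular, if
`char F` divides `m`, the characteristic polynomial is `z^n`, while `rank F_mat = ℓ`. -/
theorem charpoly_of_subgroup_sum
    {G : Type*} [Group G] [IsCyclic G] [Fintype G] [DecidableEq G] {F : Type*} [Field F]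
    (H : Subgroup G) [Fintype H] (ℓ m : ℕ)
    (hm : Fintype.card H = m) (hn : Fintype.card G = ℓ * m)
    (f : MonoidAlgebra F G) (hf : f = ∑ h : H, MonoidAlgebra.of F G (h : G)) :
    (rho F f).charpoly
        = Polynomial.X ^ (Fintype.card G - ℓ)
          * (Polynomial.X - Polynomial.C ((m : F))) ^ ℓ ∧
    ((ringChar F ∣ m) → (rho F f).charpoly = Polynomial.X ^ (Fintype.card G)) ∧
    (rho F f).rank = ℓ :=
  charpoly_of_subgroup_sum_general H ℓ m hm hn f hf
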